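/- arXiv:2204.10616 — 3 statements merged into one kernel-verified Lean document; each statement's English description precedes it below -/
import Mathlib

section
/- Under the laser model f(t) = λ e^{-iω₀t - i√(2γ₀)W(t)} u(t), one has E[ conj(f(s)) f(t) ] = |λ|² exp(iω₀(s−t) − γ₀|t−s|) (w² + v(t−s)). -/
open MeasureTheory

/-- `E[conj(f(s)) f(t)] = |λ|² exp(iω₀(s−t) − γ₀|t−s|)(w² + v(t−s))`. -/
theorem stmt1
    {Ω : Type*} [MeasureSpace Ω] [IsProbabilityMeasure (volume : Measure Ω)]
    (lam : ℂ) (ω₀ γ₀ w : ℝ) (hω₀ : 0 < ω₀) (hγ₀ : 0 < γ₀)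
    (W u : ℝ → Ω → ℝ) (v : ℝ → ℝ)
    (f : ℝ → Ω → ℂ)
    (hf : ∀ t ω, f t ω =
      lam * Complex.exp (-Complex.I * ω₀ * t
        - Complex.I * Real.sqrt (2 * γ₀) * W t ω) * u t ω)
    -- Brownian characteristic function: E[e^{iθ(W(t)−W(s))}] = e^{−θ²|t−s|/2}
    (hW : ∀ (θ t s : ℝ), ∫ ω, Complex.exp (Complex.I * θ * (W t ω - W s ω)) =
      Complex.exp (-((θ ^ 2 : ℝ) : ℂ) * (|t - s| : ℝ) / 2))
    -- u has mean w and covariance v(t−s): E[u(t)u(s)] = w² + v(t−s)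
    (huu : ∀ t s, ∫ ω, u t ω * u s ω = w ^ 2 + v (t - s))
    (hnorm : ∀ t, ∫ ω, (u t ω) ^ 2 = 1)
    -- independence of u and W, in the form of factorization of the relevant expectation
    (hfact : ∀ t s,
      ∫ ω, Complex.exp (Complex.I * Real.sqrt (2 * γ₀) * (W s ω - W t ω))
          * ((u s ω * u t ω : ℝ) : ℂ) =
        (∫ ω, Complex.exp (Complex.I * Real.sqrt (2 * γ₀) * (W s ω - W t ω)))
          * ((∫ ω, u s ω * u t ω : ℝ) : ℂ))
    (t s : ℝ) :
    ∫ ω, (starRingEnd ℂ) (f s ω) * f t ω =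
      ((‖lam‖ ^ 2 : ℝ) : ℂ)
        * Complex.exp (Complex.I * ω₀ * (s - t) - (γ₀ : ℂ) * (|t - s| : ℝ))
        * ((w ^ 2 + v (t - s) : ℝ) : ℂ) := by
  set θ : ℝ := Real.sqrt (2 * γ₀) with hθ
  have hθ2 : (θ : ℝ) ^ 2 = 2 * γ₀ := Real.sq_sqrt (by positivity)
  have hl : ((‖lam‖ ^ 2 : ℝ) : ℂ) = (starRingEnd ℂ) lam * lam := by
    rw [← Complex.normSq_eq_norm_sq, Complex.normSq_eq_conj_mul_self]
  have hexp : ∀ ω : Ω, Complex.exp (- -Complex.I * (ω₀ : ℂ) * (s : ℂ)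
        - -Complex.I * (θ : ℂ) * ((W s ω : ℝ) : ℂ)) *
      Complex.exp (-Complex.I * (ω₀ : ℂ) * (t : ℂ)
        - Complex.I * (θ : ℂ) * ((W t ω : ℝ) : ℂ)) =
      Complex.exp (Complex.I * (ω₀ : ℂ) * ((s : ℂ) - (t : ℂ))) *
      Complex.exp (Complex.I * (θ : ℂ) * (((W s ω : ℝ) : ℂ) - ((W t ω : ℝ) : ℂ))) := by
    intro ω
    rw [← Complex.exp_add, ← Complex.exp_add]
    ring_nf
  have key : ∀ ω, (starRingEnd ℂ) (f s ω) * f t ω =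
      (((‖lam‖ ^ 2 : ℝ) : ℂ) * Complex.exp (Complex.I * ω₀ * (s - t))) *
      (Complex.exp (Complex.I * θ * (W s ω - W t ω)) * ((u s ω * u t ω : ℝ) : ℂ)) := by
    intro ω
    simp only [hf, map_mul, ← Complex.exp_conj, map_sub, map_neg, Complex.conj_I,
      Complex.conj_ofReal, Complex.ofReal_mul, hl]
    linear_combination ((starRingEnd ℂ) lam * lam * (u s ω : ℂ) * (u t ω : ℂ)) * hexp ω
  simp only [key]
  rw [integral_const_mul, hfact t s, hW θ s t]
  have habs : |s - t| = |t - s| := abs_sub_comm s t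
  have hmul : (∫ ω, u s ω * u t ω) = w ^ 2 + v (t - s) := by
    simp only [mul_comm (u s _)]
    exact huu t s
  rw [hmul, habs, hθ2]
  rw [mul_assoc, ← mul_assoc (Complex.exp _), mul_comm (Complex.exp _) (Complex.exp _),
    ← Complex.exp_add]
  push_cast
  ring_nf
end

section
/- Define κ_{j2}, κ_{j3}, Δ_{j2} by κ_{12}=η₂[(1−η₃)ε₁ξ₁²+η₃ε₃ξ₃²], κ_{13}=√(η₁η₂η₃(1−η₃))(ε₁ξ₁+ε₃ξ₃), Δ_{12}=η₂[(1−η₃)ε₁ξ₁−η₃ε₃ξ₃], and set G_{13}=(1−η₁)/η₁, V₁² = Δ₁₂²/(η₂κ₁₃²), σ₁² = [ε₁(1−ε₁)ξ₁²/η₃ + ε₃(1−ε₃)ξ₃²/(1−η₃)] / (η₁(ε₁ξ₁+ε₃ξ₃)²). Then κ_{12} = κ_{13}² (G_{13} + V₁² + σ₁² + 1), provided η₁,η₂,η₃ ∈ (0,1). -/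
/-- the decomposition `κ₁₂ = κ₁₃²(G₁₃ + V₁² + σ₁² + 1)`. -/
theorem stmt7 (η₁ η₂ η₃ ε₁ ε₃ ξ₁ ξ₃ : ℝ)
    (hη₁ : η₁ ∈ Set.Ioo (0 : ℝ) 1) (hη₂ : η₂ ∈ Set.Ioo (0 : ℝ) 1)
    (hη₃ : η₃ ∈ Set.Ioo (0 : ℝ) 1)
    (hε₁ : ε₁ ∈ Set.Ioc (0 : ℝ) 1) (hε₃ : ε₃ ∈ Set.Ioc (0 : ℝ) 1)
    (hξ₁ : 0 < ξ₁) (hξ₃ : 0 < ξ₃)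
    (κ12 κ13 Δ12 G13 V1sq σ1sq : ℝ)
    (hκ12 : κ12 = η₂ * ((1 - η₃) * ε₁ * ξ₁ ^ 2 + η₃ * ε₃ * ξ₃ ^ 2))
    (hκ13 : κ13 = Real.sqrt (η₁ * η₂ * η₃ * (1 - η₃)) * (ε₁ * ξ₁ + ε₃ * ξ₃))
    (hΔ12 : Δ12 = η₂ * ((1 - η₃) * ε₁ * ξ₁ - η₃ * ε₃ * ξ₃))
    (hG13 : G13 = (1 - η₁) / η₁)
    (hV1 : V1sq = Δ12 ^ 2 / (η₂ * κ13 ^ 2))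
    (hσ1 : σ1sq = (ε₁ * (1 - ε₁) * ξ₁ ^ 2 / η₃ + ε₃ * (1 - ε₃) * ξ₃ ^ 2 / (1 - η₃))
      / (η₁ * (ε₁ * ξ₁ + ε₃ * ξ₃) ^ 2)) :
    κ12 = κ13 ^ 2 * (G13 + V1sq + σ1sq + 1) := by
  obtain ⟨h1, h1'⟩ := hη₁
  obtain ⟨h2, h2'⟩ := hη₂
  obtain ⟨h3, h3'⟩ := hη₃
  obtain ⟨he1, -⟩ := hε₁
  obtain ⟨he3, -⟩ := hε₃
  have hs : 0 < ε₁ * ξ₁ + ε₃ * ξ₃ := by positivity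
  have h3'' : 0 < 1 - η₃ := by linarith
  have hκ13sq : κ13 ^ 2 = η₁ * η₂ * η₃ * (1 - η₃) * (ε₁ * ξ₁ + ε₃ * ξ₃) ^ 2 := by
    rw [hκ13, mul_pow, Real.sq_sqrt (by positivity)]
  subst hκ12 hΔ12 hG13 hV1 hσ1
  rw [hκ13sq]
  field_simp
  ring
end

section
/- If h(t) = ϰe^{−ϰt} and v(t) = (1−w²)e^{−γ₁|t|} with ϰ, γ₁ > 0 and w² ≤ 1, then C₀ := 2∫₀^∞∫₀^∞ h(s)h(s') v(s−s')(2w² + v(s−s')) ds ds' = [2ϰ(1−w²)/(ϰ+2γ₁)][1 + w² + 2γ₁w²/(ϰ+γ₁)]. -/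
open MeasureTheory Set Filter

noncomputable def Eb (a b s : ℝ) : ℝ := ∫ u in (0:ℝ)..s, Real.exp ((b-a)*u)

lemma hasDerivAt_exp_lin (c t : ℝ) :
    HasDerivAt (fun t => Real.exp (c*t)) (c * Real.exp (c*t)) t := by
  have h := (Real.hasDerivAt_exp (c*t)).comp t ((hasDerivAt_id t).const_mul c)
  simpa [mul_comm, Function.comp_def] using h

lemma exp_Ioi_int {c : ℝ} (hc : 0 < c) (x : ℝ) :
    ∫ t in Set.Ioi x, Real.exp (-c*t) = Real.exp (-c*x)/c := by
  have hderiv : ∀ t ∈ Set.Ici x, HasDerivAt (fun t => -Real.exp (-c*t)/c)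
      (Real.exp (-c*t)) t := by
    intro t _
    have h := ((hasDerivAt_exp_lin (-c) t).div_const c).neg
    have e1 : Real.exp (-c*t) = -(-c * Real.exp (-c*t)/c) := by
      field_simp [hc.ne']
    have e2 : (fun x : ℝ => -Real.exp (-c*x)/c) = fun x => -(Real.exp (-c*x)/c) := by
      funext x; ring
    rw [e2, e1]; exact h
  have htend : Tendsto (fun t => -Real.exp (-c*t)/c) atTop (nhds 0) := by
    have h1 : Tendsto (fun t : ℝ => c * t) atTop atTop :=
      Tendsto.const_mul_atTop hc tendsto_id
    have h2 : Tendsto (fun t : ℝ => Real.exp (-c*t)) atTop (nhds 0) := by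
      simpa [neg_mul, Real.exp_neg, Function.comp_def, Pi.inv_def] using
        (Real.tendsto_exp_atTop.comp h1).inv_tendsto_atTop
    simpa using (h2.neg).div_const c
  have := integral_Ioi_of_hasDerivAt_of_tendsto' hderiv
    (exp_neg_integrableOn_Ioi x hc) htend
  rw [this]; ring

lemma cont_integrand (a b s : ℝ) :
    Continuous fun t => Real.exp (-a*t) * Real.exp (-b*|s-t|) := by
  fun_prop

lemma integrableOn_inner (a b s x : ℝ) (ha : 0 < a) (hb : 0 ≤ b) :
    IntegrableOn (fun t => Real.exp (-a*t) * Real.exp (-b*|s-t|)) (Set.Ioi x) := by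
  apply Integrable.mono' (exp_neg_integrableOn_Ioi x ha)
  · exact (cont_integrand a b s).aestronglyMeasurable.restrict
  · refine ae_of_all _ fun t => ?_
    rw [Real.norm_eq_abs, abs_of_nonneg (by positivity)]
    have h1 : Real.exp (-b*|s-t|) ≤ 1 := by
      rw [Real.exp_le_one_iff]
      have := abs_nonneg (s-t)
      nlinarith
    nlinarith [Real.exp_pos (-a*t), (Real.exp_pos (-b*|s-t|)).le]

lemma inner_int (a b : ℝ) (ha : 0 < a) (hb : 0 < b) {s : ℝ} (hs : 0 ≤ s) :
    ∫ t in Set.Ioi (0:ℝ), Real.exp (-a*t) * Real.exp (-b*|s-t|)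
      = Real.exp (-b*s) * Eb a b s + Real.exp (-a*s)/(a+b) := by
  rw [← Set.Ioc_union_Ioi_eq_Ioi hs,
    setIntegral_union (Set.Ioc_disjoint_Ioi le_rfl) measurableSet_Ioi
      ((cont_integrand a b s).integrableOn_Ioc) (integrableOn_inner a b s s ha hb.le)]
  congr 1
  · rw [setIntegral_congr_fun measurableSet_Ioc
      (g := fun t => Real.exp (-b*s) * Real.exp ((b-a)*t)) ?_]
    · rw [integral_const_mul, Eb,
        intervalIntegral.integral_of_le hs]
    · intro t ht
      dsimp only
      rw [abs_of_nonneg (sub_nonneg.2 ht.2), ← Real.exp_add, ← Real.exp_add]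
      ring_nf
  · rw [setIntegral_congr_fun measurableSet_Ioi
      (g := fun t => Real.exp (b*s) * Real.exp (-(a+b)*t)) ?_]
    · rw [integral_const_mul, exp_Ioi_int (by positivity) s,
        ← mul_div_assoc, ← Real.exp_add]
      ring_nf
    · intro t ht
      dsimp only
      rw [abs_of_neg (sub_neg.2 ht), ← Real.exp_add, ← Real.exp_add]
      ring_nf

lemma Eb_nonneg (a b : ℝ) {s : ℝ} (hs : 0 ≤ s) : 0 ≤ Eb a b s :=
  intervalIntegral.integral_nonneg hs fun u _ => (Real.exp_pos _).le

lemma Eb_le (a b : ℝ) (ha : 0 < a) (hb : 0 < b) {s : ℝ} (hs : 0 ≤ s) :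
    Eb a b s ≤ s * Real.exp (b*s) := by
  have hle : ∀ u ∈ Set.Icc (0:ℝ) s, Real.exp ((b-a)*u) ≤ Real.exp (b*s) := by
    intro u hu
    exact Real.exp_le_exp.2 (by nlinarith [hu.1, hu.2])
  calc Eb a b s ≤ ∫ _ in (0:ℝ)..s, Real.exp (b*s) :=
        intervalIntegral.integral_mono_on hs
          (Continuous.intervalIntegrable (by fun_prop) _ _)
          (intervalIntegrable_const) hle
    _ = s * Real.exp (b*s) := by simp

lemma Eb_continuous (a b : ℝ) : Continuous fun s => Eb a b s :=
  intervalIntegral.continuous_primitive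
    (fun x y => Continuous.intervalIntegrable (by fun_prop) x y) 0

lemma Eb_hasDerivAt (a b s : ℝ) :
    HasDerivAt (fun s => Eb a b s) (Real.exp ((b-a)*s)) s :=
  intervalIntegral.integral_hasDerivAt_right
    (Continuous.intervalIntegrable (by fun_prop) _ _)
    ((Continuous.stronglyMeasurable (f := fun u => Real.exp ((b-a)*u))
      (by fun_prop)).stronglyMeasurableAtFilter)
    (Continuous.continuousAt (by fun_prop))

lemma expE_bound (a b : ℝ) (ha : 0 < a) (hb : 0 < b) {s : ℝ} (hs : 0 ≤ s) :
    Real.exp (-(a+b)*s) * Eb a b s ≤ 2/a * Real.exp (-(a/2)*s) := by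
  have h1 : Real.exp (-(a+b)*s) * Eb a b s ≤ Real.exp (-(a+b)*s) * (s * Real.exp (b*s)) :=
    mul_le_mul_of_nonneg_left (Eb_le a b ha hb hs) (Real.exp_pos _).le
  have h2 : Real.exp (-(a+b)*s) * (s * Real.exp (b*s)) = s * Real.exp (-(a/2)*s) * Real.exp (-(a/2)*s) := by
    rw [show Real.exp (-(a+b)*s) * (s * Real.exp (b*s))
        = s * (Real.exp (-(a+b)*s) * Real.exp (b*s)) from by ring,
      show s * Real.exp (-(a/2)*s) * Real.exp (-(a/2)*s)
        = s * (Real.exp (-(a/2)*s) * Real.exp (-(a/2)*s)) from by ring,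
      ← Real.exp_add, ← Real.exp_add]
    ring_nf
  have h3 : s * Real.exp (-(a/2)*s) ≤ 2/a := by
    have h4 : (a/2)*s ≤ Real.exp ((a/2)*s) := (Real.add_one_le_exp _).trans' (by linarith)
    have e : Real.exp (-(a/2)*s) = (Real.exp ((a/2)*s))⁻¹ := by
      rw [← Real.exp_neg]; ring_nf
    have hE := Real.exp_pos ((a/2)*s)
    have hinv : Real.exp ((a/2)*s) * (Real.exp ((a/2)*s))⁻¹ = 1 := mul_inv_cancel₀ hE.ne'
    have hinvpos : 0 < (Real.exp ((a/2)*s))⁻¹ := inv_pos.2 hE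
    have h6 : a/2 * (s * (Real.exp ((a/2)*s))⁻¹) ≤ 1 := by
      calc a/2 * (s * (Real.exp ((a/2)*s))⁻¹) = (a/2*s) * (Real.exp ((a/2)*s))⁻¹ := by ring
        _ ≤ Real.exp ((a/2)*s) * (Real.exp ((a/2)*s))⁻¹ :=
            mul_le_mul_of_nonneg_right h4 hinvpos.le
        _ = 1 := hinv
    rw [e, le_div_iff₀ ha]
    nlinarith
  calc Real.exp (-(a+b)*s) * Eb a b s ≤ s * Real.exp (-(a/2)*s) * Real.exp (-(a/2)*s) := by
        rw [← h2]; exact h1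
    _ ≤ 2/a * Real.exp (-(a/2)*s) :=
        mul_le_mul_of_nonneg_right h3 (Real.exp_pos _).le

lemma expE_integrable (a b : ℝ) (ha : 0 < a) (hb : 0 < b) :
    IntegrableOn (fun s => Real.exp (-(a+b)*s) * Eb a b s) (Set.Ioi 0) := by
  apply Integrable.mono' ((exp_neg_integrableOn_Ioi 0 (half_pos ha)).const_mul (2/a))
  · exact (Continuous.aestronglyMeasurable (by
      exact (Real.continuous_exp.comp (by fun_prop)).mul (Eb_continuous a b))).restrict
  · filter_upwards [ae_restrict_mem measurableSet_Ioi] with s hs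
    have hs' : (0:ℝ) ≤ s := le_of_lt hs
    rw [Real.norm_eq_abs, abs_of_nonneg (mul_nonneg (Real.exp_pos _).le (Eb_nonneg a b hs'))]
    have := expE_bound a b ha hb hs'
    calc Real.exp (-(a+b)*s) * Eb a b s ≤ 2/a * Real.exp (-(a/2)*s) := this
      _ = 2/a * Real.exp (-(a/2)*s) := rfl

lemma expE_integral (a b : ℝ) (ha : 0 < a) (hb : 0 < b) :
    ∫ s in Set.Ioi (0:ℝ), Real.exp (-(a+b)*s) * Eb a b s = 1/(2*a*(a+b)) := by
  have hab : (0:ℝ) < a + b := by linarith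
  set Φ : ℝ → ℝ := fun s =>
    -(Real.exp (-(a+b)*s) * Eb a b s/(a+b)) - Real.exp (-(2*a)*s)/(2*a*(a+b)) with hΦ
  have hderiv : ∀ s ∈ Set.Ici (0:ℝ), HasDerivAt Φ (Real.exp (-(a+b)*s) * Eb a b s) s := by
    intro s _
    have h1 : HasDerivAt (fun s => Real.exp (-(a+b)*s) * Eb a b s)
        (-(a+b) * Real.exp (-(a+b)*s) * Eb a b s
          + Real.exp (-(a+b)*s) * Real.exp ((b-a)*s)) s := by
      have := (hasDerivAt_exp_lin (-(a+b)) s).mul (Eb_hasDerivAt a b s)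
      exact this.congr_deriv (by ring)
    have h2 : HasDerivAt (fun s => Real.exp (-(2*a)*s)) (-(2*a) * Real.exp (-(2*a)*s)) s :=
      hasDerivAt_exp_lin (-(2*a)) s
    have h3 := ((h1.div_const (a+b)).neg).sub (h2.div_const (2*a*(a+b)))
    refine h3.congr_deriv ?_
    rw [← Real.exp_add]
    have e1 : -(a+b)*s + (b-a)*s = -(2*a)*s := by ring
    rw [e1]
    field_simp
    ring
  have htend : Filter.Tendsto Φ Filter.atTop (nhds 0) := by
    have t1 : Filter.Tendsto (fun s => Real.exp (-(a+b)*s) * Eb a b s)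
        Filter.atTop (nhds 0) := by
      apply squeeze_zero' (g := fun s => 2/a * Real.exp (-(a/2)*s))
      · filter_upwards [Filter.eventually_ge_atTop (0:ℝ)] with s hs
        exact mul_nonneg (Real.exp_pos _).le (Eb_nonneg a b hs)
      · filter_upwards [Filter.eventually_ge_atTop (0:ℝ)] with s hs
        exact expE_bound a b ha hb hs
      · have h1 : Filter.Tendsto (fun s : ℝ => (a/2) * s) Filter.atTop Filter.atTop :=
          Filter.Tendsto.const_mul_atTop (half_pos ha) Filter.tendsto_id
        have h2 : Filter.Tendsto (fun s : ℝ => Real.exp (-(a/2)*s)) Filter.atTop (nhds 0) := by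
          simpa [neg_mul, Real.exp_neg, Function.comp_def, Pi.inv_def] using
            (Real.tendsto_exp_atTop.comp h1).inv_tendsto_atTop
        simpa using h2.const_mul (2/a)
    have t2 : Filter.Tendsto (fun s : ℝ => Real.exp (-(2*a)*s)) Filter.atTop (nhds 0) := by
      have h1 : Filter.Tendsto (fun s : ℝ => (2*a) * s) Filter.atTop Filter.atTop :=
        Filter.Tendsto.const_mul_atTop (by linarith) Filter.tendsto_id
      simpa [neg_mul, Real.exp_neg, Function.comp_def, Pi.inv_def] using
        (Real.tendsto_exp_atTop.comp h1).inv_tendsto_atTop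
    have h8 := ((t1.div_const (a+b)).neg).sub (t2.div_const (2*a*(a+b)))
    have h9 : -((0:ℝ)/(a+b)) - 0/(2*a*(a+b)) = 0 := by norm_num
    rw [← h9]
    exact h8
  have := integral_Ioi_of_hasDerivAt_of_tendsto' hderiv (expE_integrable a b ha hb) htend
  rw [this, hΦ]
  simp [Eb]

lemma outer_ptwise (a b : ℝ) (s : ℝ) :
    Real.exp (-a*s) * (Real.exp (-b*s) * Eb a b s + Real.exp (-a*s)/(a+b))
      = Real.exp (-(a+b)*s) * Eb a b s + Real.exp (-(2*a)*s)/(a+b) := by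
  have e1 : Real.exp (-a*s) * Real.exp (-b*s) = Real.exp (-(a+b)*s) := by
    rw [← Real.exp_add]; ring_nf
  have e2 : Real.exp (-a*s) * Real.exp (-a*s) = Real.exp (-(2*a)*s) := by
    rw [← Real.exp_add]; ring_nf
  calc Real.exp (-a*s) * (Real.exp (-b*s) * Eb a b s + Real.exp (-a*s)/(a+b))
      = (Real.exp (-a*s) * Real.exp (-b*s)) * Eb a b s
        + (Real.exp (-a*s) * Real.exp (-a*s))/(a+b) := by ring
    _ = _ := by rw [e1, e2]

lemma outer_integrable (a b : ℝ) (ha : 0 < a) (hb : 0 < b) :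
    IntegrableOn (fun s => Real.exp (-a*s) * (Real.exp (-b*s) * Eb a b s
      + Real.exp (-a*s)/(a+b))) (Set.Ioi 0) := by
  have h2 : IntegrableOn (fun s => Real.exp (-(a+b)*s) * Eb a b s
      + Real.exp (-(2*a)*s)/(a+b)) (Set.Ioi 0) :=
    (expE_integrable a b ha hb).add ((exp_neg_integrableOn_Ioi 0 (by linarith)).div_const (a+b))
  exact h2.congr_fun (fun s _ => (outer_ptwise a b s).symm) measurableSet_Ioi

lemma outer_integral (a b : ℝ) (ha : 0 < a) (hb : 0 < b) :
    ∫ s in Set.Ioi (0:ℝ), Real.exp (-a*s) * (Real.exp (-b*s) * Eb a b s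
      + Real.exp (-a*s)/(a+b)) = 1/(a*(a+b)) := by
  rw [setIntegral_congr_fun measurableSet_Ioi (fun s _ => outer_ptwise a b s),
    integral_add (expE_integrable a b ha hb)
      ((exp_neg_integrableOn_Ioi 0 (by linarith : (0:ℝ) < 2*a)).div_const (a+b)),
    expE_integral a b ha hb, integral_div, exp_Ioi_int (by linarith : (0:ℝ) < 2*a) 0]
  have hab : a + b ≠ 0 := by positivity
  have ha' : a ≠ 0 := ha.ne'
  simp only [mul_zero, Real.exp_zero]
  field_simp
  ring

/-- the RIN coefficient `C₀` for exponential response function and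
exponential intensity correlations. -/
theorem stmt17 (ϰ γ₁ w : ℝ) (hϰ : 0 < ϰ) (hγ₁ : 0 < γ₁) (hw : w ^ 2 ≤ 1)
    (h v : ℝ → ℝ)
    (hh : ∀ t, h t = ϰ * Real.exp (-ϰ * t))
    (hv : ∀ t, v t = (1 - w ^ 2) * Real.exp (-γ₁ * |t|)) :
    2 * ∫ s in Set.Ioi (0 : ℝ), ∫ s' in Set.Ioi (0 : ℝ),
        h s * h s' * (v (s - s') * (2 * w ^ 2 + v (s - s'))) =
      (2 * ϰ * (1 - w ^ 2) / (ϰ + 2 * γ₁)) * (1 + w ^ 2 + 2 * γ₁ * w ^ 2 / (ϰ + γ₁)) := by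
  have h2γ : (0:ℝ) < 2*γ₁ := by linarith
  set c1 : ℝ := 2*w^2*(1-w^2)*ϰ^2 with hc1
  set c2 : ℝ := (1-w^2)^2*ϰ^2 with hc2
  have inner : ∀ s : ℝ, 0 ≤ s →
      (∫ s' in Set.Ioi (0:ℝ), h s * h s' * (v (s - s') * (2 * w ^ 2 + v (s - s'))))
      = c1 * (Real.exp (-ϰ*s) * (Real.exp (-γ₁*s) * Eb ϰ γ₁ s + Real.exp (-ϰ*s)/(ϰ+γ₁)))
        + c2 * (Real.exp (-ϰ*s) * (Real.exp (-(2*γ₁)*s) * Eb ϰ (2*γ₁) s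
            + Real.exp (-ϰ*s)/(ϰ+2*γ₁))) := by
    intro s hs
    have key : ∀ s' : ℝ, h s * h s' * (v (s - s') * (2 * w ^ 2 + v (s - s')))
        = (c1 * Real.exp (-ϰ*s)) * (Real.exp (-ϰ*s') * Real.exp (-γ₁*|s-s'|))
          + (c2 * Real.exp (-ϰ*s)) * (Real.exp (-ϰ*s') * Real.exp (-(2*γ₁)*|s-s'|)) := by
      intro s'
      have e2 : Real.exp (-(2*γ₁)*|s-s'|)
          = Real.exp (-γ₁*|s-s'|) * Real.exp (-γ₁*|s-s'|) := by
        rw [← Real.exp_add]; ring_nf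
      rw [hh, hh, hv, e2, hc1, hc2]
      ring
    simp only [key]
    rw [integral_add
        ((integrableOn_inner ϰ γ₁ s 0 hϰ hγ₁.le).const_mul _)
        ((integrableOn_inner ϰ (2*γ₁) s 0 hϰ h2γ.le).const_mul _),
      integral_const_mul, integral_const_mul,
      inner_int ϰ γ₁ hϰ hγ₁ hs, inner_int ϰ (2*γ₁) hϰ h2γ hs]
    ring
  rw [setIntegral_congr_fun measurableSet_Ioi (fun s hs => inner s (le_of_lt hs)),
    integral_add ((outer_integrable ϰ γ₁ hϰ hγ₁).const_mul c1)
      ((outer_integrable ϰ (2*γ₁) hϰ h2γ).const_mul c2),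
    integral_const_mul, integral_const_mul,
    outer_integral ϰ γ₁ hϰ hγ₁, outer_integral ϰ (2*γ₁) hϰ h2γ]
  have h1 : ϰ ≠ 0 := hϰ.ne'
  have h2 : ϰ + γ₁ ≠ 0 := by positivity
  have h3 : ϰ + 2*γ₁ ≠ 0 := by positivity
  field_simp
  ring
end
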